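/- Let J ⊆ ℝ be an open interval on which f ≠ 0, f' ≠ 0 and W > 0. Then the rotational hypersurface is 3-minimal over J (i.e. 𝔠₃ = 0 at every point (u, v, w) with u ∈ J and cos w ≠ 0) if and only if either φ is constant on J, or there exist constants c₁ ≠ 0 and c₂ such that φ(u) = c₁·f(u) + c₂ for all u ∈ J. -/

import Mathlib

open Real Matrix

noncomputable section

/-- A vector in Euclidean 4-space `𝔼⁴`. -/
def vec4 (a b c d : ℝ) : EuclideanSpace ℝ (Fin 4) :=
  (WithLp.equiv 2 (Fin 4 → ℝ)).symm ![a, b, c, d]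

/-- Partial derivative in the `i`-th variable (`i = 0,1,2` for `u,v,w`)
of a map `ℝ³ → 𝔼⁴`. -/
def pd : Fin 3 → (ℝ → ℝ → ℝ → EuclideanSpace ℝ (Fin 4)) →
    ℝ → ℝ → ℝ → EuclideanSpace ℝ (Fin 4)
  | 0, X, u, v, w => deriv (fun t => X t v w) u
  | 1, X, u, v, w => deriv (fun t => X u t w) v
  | 2, X, u, v, w => deriv (fun t => X u v t) w

/-- The rotational hypersurface in `𝔼⁴` generated by the profile curve
`u ↦ (f u, 0, 0, φ u)` rotated about the `x₄`-axis. -/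
def rotHyp (f φ : ℝ → ℝ) (u v w : ℝ) : EuclideanSpace ℝ (Fin 4) :=
  vec4 (f u * cos v * cos w) (f u * sin v * cos w) (f u * sin w) (φ u)

/-- The Gauss map `G = W^{-1/2}·(φ'·cos v·cos w, φ'·sin v·cos w, φ'·sin w, -f')`,
where `W = f'² + φ'²`. -/
def gaussMap (f φ : ℝ → ℝ) (u v w : ℝ) : EuclideanSpace ℝ (Fin 4) :=
  ((deriv f u ^ 2 + deriv φ u ^ 2) ^ (-(1 : ℝ) / 2)) •
    vec4 (deriv φ u * cos v * cos w) (deriv φ u * sin v * cos w)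
      (deriv φ u * sin w) (-deriv f u)

/-- The first fundamental form matrix `I = (⟨∂ᵢx, ∂ⱼx⟩)ᵢⱼ`. -/
def firstFF (f φ : ℝ → ℝ) (u v w : ℝ) : Matrix (Fin 3) (Fin 3) ℝ :=
  Matrix.of fun i j => (inner ℝ (pd i (rotHyp f φ) u v w) (pd j (rotHyp f φ) u v w) : ℝ)

/-- The second fundamental form matrix `II = (⟨∂ᵢ∂ⱼx, G⟩)ᵢⱼ`. -/
def secondFF (f φ : ℝ → ℝ) (u v w : ℝ) : Matrix (Fin 3) (Fin 3) ℝ :=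
  Matrix.of fun i j => (inner ℝ (pd i (pd j (rotHyp f φ)) u v w) (gaussMap f φ u v w) : ℝ)

/-- The third fundamental form matrix `III = (⟨∂ᵢG, ∂ⱼG⟩)ᵢⱼ`. -/
def thirdFF (f φ : ℝ → ℝ) (u v w : ℝ) : Matrix (Fin 3) (Fin 3) ℝ :=
  Matrix.of fun i j => (inner ℝ (pd i (gaussMap f φ) u v w) (pd j (gaussMap f φ) u v w) : ℝ)

/-- The shape operator matrix `S = I⁻¹ · II`. -/
def shapeOp (f φ : ℝ → ℝ) (u v w : ℝ) : Matrix (Fin 3) (Fin 3) ℝ :=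
  (firstFF f φ u v w)⁻¹ * secondFF f φ u v w

/-- The fourth fundamental form matrix `IV = III · S`. -/
def fourthFF (f φ : ℝ → ℝ) (u v w : ℝ) : Matrix (Fin 3) (Fin 3) ℝ :=
  thirdFF f φ u v w * shapeOp f φ u v w


-- ===== auxiliary lemmas =====

lemma vec4_eq (a b c d : ℝ) :
    vec4 a b c d = a • EuclideanSpace.single (0:Fin 4) (1:ℝ)
      + b • EuclideanSpace.single (1:Fin 4) (1:ℝ)
      + c • EuclideanSpace.single (2:Fin 4) (1:ℝ)
      + d • EuclideanSpace.single (3:Fin 4) (1:ℝ) := by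
  ext i
  fin_cases i <;>
    simp [vec4, WithLp.equiv_symm_apply, EuclideanSpace.single_apply, PiLp.add_apply,
      PiLp.smul_apply]

lemma inner_vec4 (a b c d a' b' c' d' : ℝ) :
    (inner ℝ (vec4 a b c d) (vec4 a' b' c' d') : ℝ) = a*a' + b*b' + c*c' + d*d' := by
  simp [vec4, PiLp.inner_apply, RCLike.inner_apply, Fin.sum_univ_four,
    WithLp.equiv_symm_apply]
  ring

lemma hasDerivAt_vec4 {a b c d : ℝ → ℝ} {a' b' c' d' t : ℝ}
    (ha : HasDerivAt a a' t) (hb : HasDerivAt b b' t)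
    (hc : HasDerivAt c c' t) (hd : HasDerivAt d d' t) :
    HasDerivAt (fun s => vec4 (a s) (b s) (c s) (d s)) (vec4 a' b' c' d') t := by
  simp only [vec4_eq]
  exact (((ha.smul_const _).add (hb.smul_const _)).add (hc.smul_const _)).add (hd.smul_const _)

lemma pd_zero (X : ℝ → ℝ → ℝ → EuclideanSpace ℝ (Fin 4)) (u v w : ℝ) :
    pd 0 X u v w = deriv (fun t => X t v w) u := rfl
lemma pd_one (X : ℝ → ℝ → ℝ → EuclideanSpace ℝ (Fin 4)) (u v w : ℝ) :
    pd 1 X u v w = deriv (fun t => X u t w) v := rfl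
lemma pd_two (X : ℝ → ℝ → ℝ → EuclideanSpace ℝ (Fin 4)) (u v w : ℝ) :
    pd 2 X u v w = deriv (fun t => X u v t) w := rfl

variable {f φ : ℝ → ℝ}

lemma pd0_rot (hf : ContDiff ℝ (⊤ : ℕ∞) f) (hφ : ContDiff ℝ (⊤ : ℕ∞) φ) :
    pd 0 (rotHyp f φ) = fun u v w => vec4 (deriv f u * cos v * cos w)
      (deriv f u * sin v * cos w) (deriv f u * sin w) (deriv φ u) := by
  funext u v w
  have hfd := (hf.differentiable (by simp) u).hasDerivAt
  have hpd := (hφ.differentiable (by simp) u).hasDerivAt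
  exact (hasDerivAt_vec4 ((hfd.mul_const _).mul_const _) ((hfd.mul_const _).mul_const _)
    (hfd.mul_const _) hpd).deriv

lemma pd1_rot :
    pd 1 (rotHyp f φ) = fun u v w => vec4 (f u * -sin v * cos w)
      (f u * cos v * cos w) 0 0 := by
  funext u v w
  exact (hasDerivAt_vec4 (((hasDerivAt_cos v).const_mul (f u)).mul_const _)
    (((hasDerivAt_sin v).const_mul (f u)).mul_const _)
    (hasDerivAt_const v _) (hasDerivAt_const v _)).deriv

lemma pd2_rot :
    pd 2 (rotHyp f φ) = fun u v w => vec4 (f u * cos v * -sin w)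
      (f u * sin v * -sin w) (f u * cos w) 0 := by
  funext u v w
  exact (hasDerivAt_vec4 ((hasDerivAt_cos w).const_mul _)
    ((hasDerivAt_cos w).const_mul _) ((hasDerivAt_sin w).const_mul _)
    (hasDerivAt_const w _)).deriv

lemma pd00_rot (hf : ContDiff ℝ (⊤ : ℕ∞) f) (hφ : ContDiff ℝ (⊤ : ℕ∞) φ) (u v w : ℝ) :
    pd 0 (pd 0 (rotHyp f φ)) u v w = vec4 (deriv (deriv f) u * cos v * cos w)
      (deriv (deriv f) u * sin v * cos w) (deriv (deriv f) u * sin w)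
      (deriv (deriv φ) u) := by
  have hfd := ((contDiff_infty_iff_deriv.mp
    (contDiff_infty_iff_deriv.mp (hf.of_le (by simp))).2).1 u).hasDerivAt
  have hpd := ((contDiff_infty_iff_deriv.mp
    (contDiff_infty_iff_deriv.mp (hφ.of_le (by simp))).2).1 u).hasDerivAt
  rw [pd_zero]
  simp only [pd0_rot hf hφ]
  exact (hasDerivAt_vec4 ((hfd.mul_const _).mul_const _) ((hfd.mul_const _).mul_const _)
    (hfd.mul_const _) hpd).deriv

lemma pd10_rot (hf : ContDiff ℝ (⊤ : ℕ∞) f) (hφ : ContDiff ℝ (⊤ : ℕ∞) φ) (u v w : ℝ) :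
    pd 1 (pd 0 (rotHyp f φ)) u v w = vec4 (deriv f u * -sin v * cos w)
      (deriv f u * cos v * cos w) 0 0 := by
  rw [pd_one]
  simp only [pd0_rot hf hφ]
  exact (hasDerivAt_vec4 (((hasDerivAt_cos v).const_mul _).mul_const _)
    (((hasDerivAt_sin v).const_mul _).mul_const _)
    (hasDerivAt_const v _) (hasDerivAt_const v _)).deriv

lemma pd20_rot (hf : ContDiff ℝ (⊤ : ℕ∞) f) (hφ : ContDiff ℝ (⊤ : ℕ∞) φ) (u v w : ℝ) :
    pd 2 (pd 0 (rotHyp f φ)) u v w = vec4 (deriv f u * cos v * -sin w)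
      (deriv f u * sin v * -sin w) (deriv f u * cos w) 0 := by
  rw [pd_two]
  simp only [pd0_rot hf hφ]
  exact (hasDerivAt_vec4 ((hasDerivAt_cos w).const_mul _) ((hasDerivAt_cos w).const_mul _)
    ((hasDerivAt_sin w).const_mul _) (hasDerivAt_const w _)).deriv

lemma pd01_rot (hf : ContDiff ℝ (⊤ : ℕ∞) f) (u v w : ℝ) :
    pd 0 (pd 1 (rotHyp f φ)) u v w = vec4 (deriv f u * -sin v * cos w)
      (deriv f u * cos v * cos w) 0 0 := by
  have hfd := (hf.differentiable (by simp) u).hasDerivAt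
  rw [pd_zero]
  simp only [pd1_rot]
  exact (hasDerivAt_vec4 ((hfd.mul_const _).mul_const _) ((hfd.mul_const _).mul_const _)
    (hasDerivAt_const u _) (hasDerivAt_const u _)).deriv

lemma pd11_rot (u v w : ℝ) :
    pd 1 (pd 1 (rotHyp f φ)) u v w = vec4 (f u * -cos v * cos w)
      (f u * -sin v * cos w) 0 0 := by
  rw [pd_one]
  simp only [pd1_rot]
  exact (hasDerivAt_vec4 (((hasDerivAt_sin v).neg.const_mul _).mul_const _)
    (((hasDerivAt_cos v).const_mul _).mul_const _)
    (hasDerivAt_const v _) (hasDerivAt_const v _)).deriv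

lemma pd21_rot (u v w : ℝ) :
    pd 2 (pd 1 (rotHyp f φ)) u v w = vec4 (f u * -sin v * -sin w)
      (f u * cos v * -sin w) 0 0 := by
  rw [pd_two]
  simp only [pd1_rot]
  exact (hasDerivAt_vec4 ((hasDerivAt_cos w).const_mul _) ((hasDerivAt_cos w).const_mul _)
    (hasDerivAt_const w _) (hasDerivAt_const w _)).deriv

lemma pd02_rot (hf : ContDiff ℝ (⊤ : ℕ∞) f) (u v w : ℝ) :
    pd 0 (pd 2 (rotHyp f φ)) u v w = vec4 (deriv f u * cos v * -sin w)
      (deriv f u * sin v * -sin w) (deriv f u * cos w) 0 := by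
  have hfd := (hf.differentiable (by simp) u).hasDerivAt
  rw [pd_zero]
  simp only [pd2_rot]
  exact (hasDerivAt_vec4 ((hfd.mul_const _).mul_const _) ((hfd.mul_const _).mul_const _)
    (hfd.mul_const _) (hasDerivAt_const u _)).deriv

lemma pd12_rot (u v w : ℝ) :
    pd 1 (pd 2 (rotHyp f φ)) u v w = vec4 (f u * -sin v * -sin w)
      (f u * cos v * -sin w) 0 0 := by
  rw [pd_one]
  simp only [pd2_rot]
  exact (hasDerivAt_vec4 (((hasDerivAt_cos v).const_mul _).mul_const _)
    (((hasDerivAt_sin v).const_mul _).mul_const _)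
    (hasDerivAt_const v _) (hasDerivAt_const v _)).deriv

lemma pd22_rot (u v w : ℝ) :
    pd 2 (pd 2 (rotHyp f φ)) u v w = vec4 (f u * cos v * -cos w)
      (f u * sin v * -cos w) (f u * -sin w) 0 := by
  rw [pd_two]
  simp only [pd2_rot]
  exact (hasDerivAt_vec4 ((hasDerivAt_sin w).neg.const_mul _) ((hasDerivAt_sin w).neg.const_mul _)
    ((hasDerivAt_cos w).const_mul _) (hasDerivAt_const w _)).deriv

lemma firstFF_eq (hf : ContDiff ℝ (⊤ : ℕ∞) f) (hφ : ContDiff ℝ (⊤ : ℕ∞) φ) (u v w : ℝ) :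
    firstFF f φ u v w = Matrix.of ![![deriv f u ^ 2 + deriv φ u ^ 2, 0, 0],
      ![0, f u ^ 2 * cos w ^ 2, 0], ![0, 0, f u ^ 2]] := by
  ext i j
  fin_cases i <;> fin_cases j
  · show (inner ℝ (pd 0 (rotHyp f φ) u v w) (pd 0 (rotHyp f φ) u v w) : ℝ)
      = deriv f u ^ 2 + deriv φ u ^ 2
    simp only [pd0_rot hf hφ, inner_vec4]
    linear_combination (deriv f u ^ 2 * cos w ^ 2) * sin_sq_add_cos_sq v
      + deriv f u ^ 2 * sin_sq_add_cos_sq w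
  · show (inner ℝ (pd 0 (rotHyp f φ) u v w) (pd 1 (rotHyp f φ) u v w) : ℝ) = 0
    simp only [pd0_rot hf hφ, pd1_rot, inner_vec4]
    ring
  · show (inner ℝ (pd 0 (rotHyp f φ) u v w) (pd 2 (rotHyp f φ) u v w) : ℝ) = 0
    simp only [pd0_rot hf hφ, pd2_rot, inner_vec4]
    linear_combination (-(deriv f u * f u * sin w * cos w)) * sin_sq_add_cos_sq v
  · show (inner ℝ (pd 1 (rotHyp f φ) u v w) (pd 0 (rotHyp f φ) u v w) : ℝ) = 0
    simp only [pd0_rot hf hφ, pd1_rot, inner_vec4]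
    ring
  · show (inner ℝ (pd 1 (rotHyp f φ) u v w) (pd 1 (rotHyp f φ) u v w) : ℝ) = f u ^ 2 * cos w ^ 2
    simp only [pd1_rot, inner_vec4]
    linear_combination (f u ^ 2 * cos w ^ 2) * sin_sq_add_cos_sq v
  · show (inner ℝ (pd 1 (rotHyp f φ) u v w) (pd 2 (rotHyp f φ) u v w) : ℝ) = 0
    simp only [pd1_rot, pd2_rot, inner_vec4]
    ring
  · show (inner ℝ (pd 2 (rotHyp f φ) u v w) (pd 0 (rotHyp f φ) u v w) : ℝ) = 0
    simp only [pd0_rot hf hφ, pd2_rot, inner_vec4]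
    linear_combination (-(deriv f u * f u * sin w * cos w)) * sin_sq_add_cos_sq v
  · show (inner ℝ (pd 2 (rotHyp f φ) u v w) (pd 1 (rotHyp f φ) u v w) : ℝ) = 0
    simp only [pd1_rot, pd2_rot, inner_vec4]
    ring
  · show (inner ℝ (pd 2 (rotHyp f φ) u v w) (pd 2 (rotHyp f φ) u v w) : ℝ) = f u ^ 2
    simp only [pd2_rot, inner_vec4]
    linear_combination (f u ^ 2 * sin w ^ 2) * sin_sq_add_cos_sq v
      + f u ^ 2 * sin_sq_add_cos_sq w

lemma secondFF_eq (hf : ContDiff ℝ (⊤ : ℕ∞) f) (hφ : ContDiff ℝ (⊤ : ℕ∞) φ) (u v w : ℝ) :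
    secondFF f φ u v w = ((deriv f u ^ 2 + deriv φ u ^ 2) ^ (-(1 : ℝ) / 2)) •
      Matrix.of ![![-(deriv f u * deriv (deriv φ) u - deriv (deriv f) u * deriv φ u), 0, 0],
        ![0, -(f u * deriv φ u * cos w ^ 2), 0], ![0, 0, -(f u * deriv φ u)]] := by
  set r := (deriv f u ^ 2 + deriv φ u ^ 2) ^ (-(1 : ℝ) / 2) with hr
  ext i j
  fin_cases i <;> fin_cases j
  · show (inner ℝ (pd 0 (pd 0 (rotHyp f φ)) u v w) (gaussMap f φ u v w) : ℝ)
      = r * -(deriv f u * deriv (deriv φ) u - deriv (deriv f) u * deriv φ u)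
    simp only [pd00_rot hf hφ, gaussMap, ← hr, real_inner_smul_right, inner_vec4]
    congr 1
    linear_combination (deriv (deriv f) u * deriv φ u * cos w ^ 2) * sin_sq_add_cos_sq v
      + (deriv (deriv f) u * deriv φ u) * sin_sq_add_cos_sq w
  · show (inner ℝ (pd 0 (pd 1 (rotHyp f φ)) u v w) (gaussMap f φ u v w) : ℝ) = r * 0
    simp only [pd01_rot hf, gaussMap, ← hr, real_inner_smul_right, inner_vec4]
    congr 1
    ring
  · show (inner ℝ (pd 0 (pd 2 (rotHyp f φ)) u v w) (gaussMap f φ u v w) : ℝ) = r * 0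
    simp only [pd02_rot hf, gaussMap, ← hr, real_inner_smul_right, inner_vec4]
    congr 1
    linear_combination (-(deriv f u * deriv φ u * sin w * cos w)) * sin_sq_add_cos_sq v
  · show (inner ℝ (pd 1 (pd 0 (rotHyp f φ)) u v w) (gaussMap f φ u v w) : ℝ) = r * 0
    simp only [pd10_rot hf hφ, gaussMap, ← hr, real_inner_smul_right, inner_vec4]
    congr 1
    ring
  · show (inner ℝ (pd 1 (pd 1 (rotHyp f φ)) u v w) (gaussMap f φ u v w) : ℝ)
      = r * -(f u * deriv φ u * cos w ^ 2)
    simp only [pd11_rot, gaussMap, ← hr, real_inner_smul_right, inner_vec4]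
    congr 1
    linear_combination (-(f u * deriv φ u * cos w ^ 2)) * sin_sq_add_cos_sq v
  · show (inner ℝ (pd 1 (pd 2 (rotHyp f φ)) u v w) (gaussMap f φ u v w) : ℝ) = r * 0
    simp only [pd12_rot, gaussMap, ← hr, real_inner_smul_right, inner_vec4]
    congr 1
    ring
  · show (inner ℝ (pd 2 (pd 0 (rotHyp f φ)) u v w) (gaussMap f φ u v w) : ℝ) = r * 0
    simp only [pd20_rot hf hφ, gaussMap, ← hr, real_inner_smul_right, inner_vec4]
    congr 1
    linear_combination (-(deriv f u * deriv φ u * sin w * cos w)) * sin_sq_add_cos_sq v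
  · show (inner ℝ (pd 2 (pd 1 (rotHyp f φ)) u v w) (gaussMap f φ u v w) : ℝ) = r * 0
    simp only [pd21_rot, gaussMap, ← hr, real_inner_smul_right, inner_vec4]
    congr 1
    ring
  · show (inner ℝ (pd 2 (pd 2 (rotHyp f φ)) u v w) (gaussMap f φ u v w) : ℝ)
      = r * -(f u * deriv φ u)
    simp only [pd22_rot, gaussMap, ← hr, real_inner_smul_right, inner_vec4]
    congr 1
    linear_combination (-(f u * deriv φ u * cos w ^ 2)) * sin_sq_add_cos_sq v
      + (-(f u * deriv φ u)) * sin_sq_add_cos_sq w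

lemma shapeOp_det (hf : ContDiff ℝ (⊤ : ℕ∞) f) (hφ : ContDiff ℝ (⊤ : ℕ∞) φ) (u v w : ℝ) :
    (shapeOp f φ u v w).det = (deriv f u ^ 2 + deriv φ u ^ 2)⁻¹ * (f u ^ 2 * cos w ^ 2)⁻¹ *
      (f u ^ 2)⁻¹ * ((deriv f u ^ 2 + deriv φ u ^ 2) ^ (-(1 : ℝ) / 2)) ^ 3 *
      (-(f u ^ 2 * cos w ^ 2 * (deriv φ u ^ 2 *
        (deriv f u * deriv (deriv φ) u - deriv (deriv f) u * deriv φ u)))) := by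
  rw [shapeOp, Matrix.det_mul, Matrix.det_nonsing_inv, firstFF_eq hf hφ, secondFF_eq hf hφ,
    Matrix.det_smul, Ring.inverse_eq_inv']
  simp [Matrix.det_fin_three]
  ring

lemma c3_zero_iff (hf : ContDiff ℝ (⊤ : ℕ∞) f) (hφ : ContDiff ℝ (⊤ : ℕ∞) φ) (u v w : ℝ)
    (hF : f u ≠ 0) (hcw : cos w ≠ 0) (hW : 0 < deriv f u ^ 2 + deriv φ u ^ 2) :
    (shapeOp f φ u v w).det = 0 ↔
      deriv φ u ^ 2 * (deriv f u * deriv (deriv φ) u - deriv (deriv f) u * deriv φ u) = 0 := by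
  rw [shapeOp_det hf hφ]
  have hr : ((deriv f u ^ 2 + deriv φ u ^ 2) ^ (-(1 : ℝ) / 2)) ≠ 0 :=
    (Real.rpow_pos_of_pos hW _).ne'
  have h1 : (deriv f u ^ 2 + deriv φ u ^ 2)⁻¹ ≠ 0 := inv_ne_zero hW.ne'
  have h2 : (f u ^ 2 * cos w ^ 2)⁻¹ ≠ 0 :=
    inv_ne_zero (mul_ne_zero (pow_ne_zero 2 hF) (pow_ne_zero 2 hcw))
  have h3 : (f u ^ 2)⁻¹ ≠ 0 := inv_ne_zero (pow_ne_zero 2 hF)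
  have hr3 : (((deriv f u ^ 2 + deriv φ u ^ 2) ^ (-(1 : ℝ) / 2)) ^ 3) ≠ 0 := pow_ne_zero _ hr
  have hF2 : f u ^ 2 ≠ 0 := pow_ne_zero _ hF
  have hcw2 : cos w ^ 2 ≠ 0 := pow_ne_zero _ hcw
  rw [mul_eq_zero, mul_eq_zero, mul_eq_zero, mul_eq_zero, neg_eq_zero, mul_eq_zero,
    mul_eq_zero]
  tauto


/-- Let `J` be an open interval on which `f ≠ 0`, `f' ≠ 0` and
`W = f'² + φ'² > 0`, and let the curvature functions `c₁, c₂, c₃` be defined by the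
characteristic polynomial identity.  The rotational hypersurface is 3-minimal over `J`
(`c₃ = 0` at every point `(u,v,w)` with `u ∈ J` and `cos w ≠ 0`) iff either `φ` is
constant on `J`, or `φ = c₁·f + c₂` on `J` for some constants `c₁ ≠ 0` and `c₂`. -/
theorem rotHyp_three_minimal_iff (f φ : ℝ → ℝ) (hf : ContDiff ℝ (⊤ : ℕ∞) f) (hφ : ContDiff ℝ (⊤ : ℕ∞) φ)
    (J : Set ℝ) (hJopen : IsOpen J) (hJ : J.OrdConnected)
    (hfu : ∀ u ∈ J, f u ≠ 0) (hfu' : ∀ u ∈ J, deriv f u ≠ 0)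
    (hW : ∀ u ∈ J, 0 < deriv f u ^ 2 + deriv φ u ^ 2)
    (c₁ c₂ c₃ : ℝ → ℝ → ℝ → ℝ)
    (hchar : ∀ u v w lam : ℝ,
      (shapeOp f φ u v w - lam • (1 : Matrix (Fin 3) (Fin 3) ℝ)).det
        = -lam ^ 3 + 3 * c₁ u v w * lam ^ 2 - 3 * c₂ u v w * lam + c₃ u v w) :
    (∀ u ∈ J, ∀ v w : ℝ, cos w ≠ 0 → c₃ u v w = 0) ↔
      ((∃ c : ℝ, ∀ u ∈ J, φ u = c) ∨
        (∃ k₁ k₂ : ℝ, k₁ ≠ 0 ∧ ∀ u ∈ J, φ u = k₁ * f u + k₂)) := by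
  -- basic differentiability facts
  have hDf : Differentiable ℝ f := hf.differentiable (by simp)
  have hDφ : Differentiable ℝ φ := hφ.differentiable (by simp)
  have hDf' : Differentiable ℝ (deriv f) := (contDiff_infty_iff_deriv.mp
    (contDiff_infty_iff_deriv.mp (hf.of_le (by simp))).2).1
  have hDφ' : Differentiable ℝ (deriv φ) := (contDiff_infty_iff_deriv.mp
    (contDiff_infty_iff_deriv.mp (hφ.of_le (by simp))).2).1
  have hc3 : ∀ u v w : ℝ, c₃ u v w = (shapeOp f φ u v w).det := by
    intro u v w
    have h := hchar u v w 0
    simpa using h.symm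
  have key : (∀ u ∈ J, ∀ v w : ℝ, cos w ≠ 0 → c₃ u v w = 0) ↔
      (∀ u ∈ J, deriv φ u ^ 2 *
        (deriv f u * deriv (deriv φ) u - deriv (deriv f) u * deriv φ u) = 0) := by
    constructor
    · intro h u hu
      have h0 := h u hu 0 0 (by simp)
      rw [hc3] at h0
      exact (c3_zero_iff hf hφ u 0 0 (hfu u hu) (by simp) (hW u hu)).mp h0
    · intro h u hu v w hcw
      rw [hc3]
      exact (c3_zero_iff hf hφ u v w (hfu u hu) hcw (hW u hu)).mpr (h u hu)
  rw [key]
  have hconv : Convex ℝ J := convex_iff_ordConnected.mpr hJ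
  constructor
  · intro h
    rcases J.eq_empty_or_nonempty with hJe | ⟨u₀, hu₀⟩
    · exact Or.inl ⟨0, by simp [hJe]⟩
    set g : ℝ → ℝ := fun x => deriv φ x ^ 3 / deriv f x ^ 3 with hg
    have hgd : ∀ x ∈ J, HasDerivAt g 0 x := by
      intro x hx
      have hfx := hfu' x hx
      have h1 : HasDerivAt (fun y => deriv φ y ^ 3)
          ((3 : ℕ) * deriv φ x ^ 2 * deriv (deriv φ) x) x := by
        simpa using ((hDφ' x).hasDerivAt.fun_pow 3)
      have h2 : HasDerivAt (fun y => deriv f y ^ 3)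
          ((3 : ℕ) * deriv f x ^ 2 * deriv (deriv f) x) x := by
        simpa using ((hDf' x).hasDerivAt.fun_pow 3)
      have h3 := h1.fun_div h2 (pow_ne_zero 3 hfx)
      refine h3.congr_deriv (Eq.symm ?_)
      rw [eq_div_iff (by positivity)]
      have hz := h x hx
      push_cast
      nlinarith [hz, sq_nonneg (deriv f x)]
    have hgc : ∀ x ∈ J, g x = g u₀ := by
      intro x hx
      refine hconv.is_const_of_fderivWithin_eq_zero
        (fun y hy => ((hgd y hy).differentiableAt).differentiableWithinAt)
        (fun y hy => ?_) hx hu₀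
      rw [fderivWithin_of_isOpen hJopen hy, ((hgd y hy).hasFDerivAt).fderiv]
      ext t
      simp
    set k : ℝ := deriv φ u₀ / deriv f u₀ with hk
    have hphik : ∀ x ∈ J, deriv φ x = k * deriv f x := by
      intro x hx
      have e1 : (deriv φ x / deriv f x) ^ 3 = (deriv φ u₀ / deriv f u₀) ^ 3 := by
        have := hgc x hx
        rw [hg] at this
        simpa [div_pow] using this
      have e2 : deriv φ x / deriv f x = k :=
        (Odd.strictMono_pow (R := ℝ) (by decide : Odd 3)).injective e1
      rw [div_eq_iff (hfu' x hx)] at e2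
      exact e2
    have hlin : ∀ x ∈ J, φ x - k * f x = φ u₀ - k * f u₀ := by
      intro x hx
      refine hconv.is_const_of_fderivWithin_eq_zero (f := fun y => φ y - k * f y)
        (fun y hy => ((hDφ y).sub ((hDf y).const_mul k)).differentiableWithinAt)
        (fun y hy => ?_) hx hu₀
      rw [fderivWithin_of_isOpen hJopen hy]
      have hd : HasDerivAt (fun y => φ y - k * f y) (deriv φ y - k * deriv f y) y :=
        (hDφ y).hasDerivAt.sub ((hDf y).hasDerivAt.const_mul k)
      rw [hphik y hy] at hd
      have hd0 : HasDerivAt (fun y => φ y - k * f y) 0 y := by simpa using hd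
      rw [hd0.hasFDerivAt.fderiv]
      ext t
      simp
    by_cases hk0 : k = 0
    · refine Or.inl ⟨φ u₀ - k * f u₀, fun x hx => ?_⟩
      have := hlin x hx
      rw [hk0] at this ⊢
      linarith
    · refine Or.inr ⟨k, φ u₀ - k * f u₀, hk0, fun x hx => ?_⟩
      have := hlin x hx
      linarith
  · rintro (⟨c, hc⟩ | ⟨k₁, k₂, hk₁, hk⟩) <;> intro u hu
    · have hφ' : deriv φ u = 0 := by
        have hev : φ =ᶠ[nhds u] fun _ => c :=
          Filter.eventually_of_mem (hJopen.mem_nhds hu) hc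
        rw [hev.deriv_eq]
        simp
      rw [hφ']
      ring
    · have hφ'J : ∀ x ∈ J, deriv φ x = k₁ * deriv f x := by
        intro x hx
        have hev : φ =ᶠ[nhds x] fun y => k₁ * f y + k₂ :=
          Filter.eventually_of_mem (hJopen.mem_nhds hx) hk
        rw [hev.deriv_eq, deriv_add_const, deriv_const_mul _ (hDf x)]
      have hφ'' : deriv (deriv φ) u = k₁ * deriv (deriv f) u := by
        have hev2 : deriv φ =ᶠ[nhds u] fun y => k₁ * deriv f y :=
          Filter.eventually_of_mem (hJopen.mem_nhds hu) hφ'J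
        rw [hev2.deriv_eq, deriv_const_mul _ (hDf' u)]
      rw [hφ'', hφ'J u hu]
      ring


end
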